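/- arXiv:math/0701801 — 8 statements merged into one kernel-verified Lean document; each statement's English description precedes it below -/
import Mathlib

section
/- Let Ω be a set with a Boolean algebra M of subsets and let Pr(M) be the set of finitely additive probability measures on M. Suppose A, B ∈ M with ∅ ⊊ B ⊊ A ⊊ Ω. Then there is no element C ∈ M such that for every probability π ∈ Pr(M) with 0 < π(B) < π(A) < 1 one has π(C) = π(A ∩ B)/π(A). -/
/-!
Put mass `1/3` on each of three points `b ∈ B`, `a ∈ A \ B` and `w ∉ A`. Then
`π(A ∩ B) / π(A) = (1/3) / (2/3) = 1/2`, whereas every set has probability `0`, `1/3`, `2/3`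
or `1`, so no `C` can have probability `1/2`.
-/

def IsFinAddProb {Ω : Type*} (M : Set (Set Ω)) (π : Set Ω → ℝ) : Prop :=
  (∀ X ∈ M, 0 ≤ π X) ∧ π (∅ : Set Ω) = 0 ∧ π (Set.univ : Set Ω) = 1 ∧
    ∀ X ∈ M, ∀ Y ∈ M, X ∩ Y = ∅ → π (X ∪ Y) = π X + π Y

open Set

noncomputable def uniformProb {Ω : Type*} (S X : Set Ω) : ℝ :=
  ((S ∩ X).ncard : ℝ) / S.ncard

section uniformProb

variable {Ω : Type*} {S : Set Ω}

theorem isFinAddProb_uniformProb (hS : S.Finite) (hS_ne : S.Nonempty) (M : Set (Set Ω)) :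
    IsFinAddProb M (uniformProb S) := by
  have hcard : (S.ncard : ℝ) ≠ 0 := by exact_mod_cast (ncard_pos hS).2 hS_ne |>.ne'
  refine ⟨fun X _ => by unfold uniformProb; positivity, by simp [uniformProb],
    by simp [uniformProb, hcard], fun X _ Y _ hXY => ?_⟩
  have hdisj : Disjoint (S ∩ X) (S ∩ Y) :=
    (disjoint_iff_inter_eq_empty.2 hXY).mono inter_subset_right inter_subset_right
  simp only [uniformProb, inter_union_distrib_left,
    ncard_union_eq hdisj (hS.subset inter_subset_left) (hS.subset inter_subset_left)]
  push_cast
  ring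

theorem uniformProb_ne_half (hS : Odd S.ncard) (X : Set Ω) : uniformProb S X ≠ 1 / 2 := by
  intro h
  have hcard : (S.ncard : ℝ) ≠ 0 := by exact_mod_cast hS.pos.ne'
  rw [uniformProb, div_eq_iff hcard] at h
  have h2 : 2 * (S ∩ X).ncard = S.ncard := by
    exact_mod_cast (by linarith : 2 * ((S ∩ X).ncard : ℝ) = S.ncard)
  exact Nat.not_even_iff_odd.2 hS ⟨(S ∩ X).ncard, by omega⟩

end uniformProb

theorem lewis_triviality_general {Ω : Type*} (M : Set (Set Ω))
    (A B : Set Ω)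
    (hB_ne : B ≠ ∅) (hBA : B ⊂ A) (hAW : A ⊂ Set.univ) :
    ¬ ∃ C ∈ M, ∀ π : Set Ω → ℝ, IsFinAddProb M π →
      0 < π B → π B < π A → π A < 1 → π C = π (A ∩ B) / π A := by
  rintro ⟨C, -, hC⟩
  obtain ⟨b, hb⟩ := nonempty_iff_ne_empty.2 hB_ne
  obtain ⟨a, haA, haB⟩ := exists_of_ssubset hBA
  obtain ⟨w, -, hwA⟩ := exists_of_ssubset hAW
  have hbA : b ∈ A := hBA.subset hb
  have hwB : w ∉ B := fun h => hwA (hBA.subset h)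
  set S : Set Ω := {a, b, w}
  have hS3 : S.ncard = 3 :=
    ncard_eq_three.2 ⟨a, b, w, ne_of_mem_of_not_mem hb haB |>.symm,
      ne_of_mem_of_not_mem haA hwA, ne_of_mem_of_not_mem hbA hwA, rfl⟩
  have hSB : uniformProb S B = 1 / 3 := by
    simp [S, uniformProb, hS3, insert_inter_of_mem, insert_inter_of_notMem, haB, hb, hwB]
  have hSA : uniformProb S A = 2 / 3 := by
    simp [S, uniformProb, hS3, insert_inter_of_mem, haA, hbA, hwA,
      ncard_pair (ne_of_mem_of_not_mem hb haB).symm]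
  have hSC := hC (uniformProb S) (isFinAddProb_uniformProb (toFinite S) (insert_nonempty _ _) M)
    (by rw [hSB]; norm_num) (by rw [hSB, hSA]; norm_num) (by rw [hSA]; norm_num)
  rw [inter_eq_right.2 hBA.subset, hSB, hSA] at hSC
  exact uniformProb_ne_half (by rw [hS3]; decide) C (by rw [hSC]; norm_num)

/-- Lewis' triviality: there is no proposition `C ∈ M` whose probability is always the
conditional probability `π(A ∩ B)/π(A)`. -/
theorem lewis_triviality {Ω : Type*} [Fintype Ω] (M : Set (Set Ω))
    (hM_empty : (∅ : Set Ω) ∈ M) (hM_univ : (Set.univ : Set Ω) ∈ M)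
    (hM_inter : ∀ X ∈ M, ∀ Y ∈ M, X ∩ Y ∈ M) (hM_compl : ∀ X ∈ M, Xᶜ ∈ M)
    (A B : Set Ω) (hA : A ∈ M) (hB : B ∈ M)
    (hB_ne : B ≠ ∅) (hBA : B ⊂ A) (hAW : A ⊂ Set.univ) :
    ¬ ∃ C ∈ M, ∀ π : Set Ω → ℝ, IsFinAddProb M π →
      0 < π B → π B < π A → π A < 1 → π C = π (A ∩ B) / π A :=
  lewis_triviality_general M A B hB_ne hBA hAW
end

section
/- Let p be a probability measure on a finite Boolean algebra with p(ψ|φ) ≥ 1 − ε₁ and p(η|φ) ≥ 1 − ε₂, where p(φ) > 0, p(φ ∧ ψ) > 0, ε₁ < 1, and conditional probability is p(β|α) = p(α ∧ β)/p(α). Then p(η | φ ∧ ψ) ≥ (1 − ε₁ − ε₂)/(1 − ε₁). -/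
/-- Probabilistic Cautious Monotonicity: if `p(ψ|φ) ≥ 1 - ε₁` and `p(η|φ) ≥ 1 - ε₂`,
then `p(η|φ∧ψ) ≥ 1 - (ε₁+ε₂)/(1-ε₁)`, and more precisely
`p(η|φ∧ψ) ≥ (1-ε₁-ε₂)/(1-ε₁)`, where `p(β|α) = p(α∧β)/p(α)`. -/
theorem cautious_monotonicity {α : Type*} [BooleanAlgebra α] [Fintype α]
    (p : α → ℝ) (ε₁ ε₂ : ℝ)
    (hnonneg : ∀ x : α, 0 ≤ p x)
    (hadd : ∀ x y : α, p (x ⊓ y) + p (x ⊔ y) = p x + p y)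
    (hbot : p ⊥ = 0) (htop : p ⊤ = 1)
    (φ ψ η : α)
    (hφ : 0 < p φ) (hφψ : 0 < p (φ ⊓ ψ)) (hε₁ : ε₁ < 1)
    (h1 : p (φ ⊓ ψ) / p φ ≥ 1 - ε₁)
    (h2 : p (φ ⊓ η) / p φ ≥ 1 - ε₂) :
    p ((φ ⊓ ψ) ⊓ η) / p (φ ⊓ ψ) ≥ 1 - (ε₁ + ε₂) / (1 - ε₁) ∧
      p ((φ ⊓ ψ) ⊓ η) / p (φ ⊓ ψ) ≥ (1 - ε₁ - ε₂) / (1 - ε₁) := by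
  have h1ε : (0:ℝ) < 1 - ε₁ := by linarith
  have mono : ∀ x y : α, x ≤ y → p x ≤ p y := by
    intro x y hxy
    have h := hadd x (y ⊓ xᶜ)
    have e1 : x ⊓ (y ⊓ xᶜ) = ⊥ := by
      rw [inf_left_comm, inf_compl_eq_bot, inf_bot_eq]
    have e2 : x ⊔ (y ⊓ xᶜ) = y := by
      rw [sup_inf_left, sup_compl_eq_top, inf_top_eq, sup_eq_right.mpr hxy]
    rw [e1, e2, hbot] at h
    nlinarith [hnonneg (y ⊓ xᶜ)]
  -- ε₁, ε₂ are nonnegative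
  have hle1 : p (φ ⊓ ψ) ≤ p φ := mono _ _ inf_le_left
  have hle2 : p (φ ⊓ η) ≤ p φ := mono _ _ inf_le_left
  have hε₂0 : 0 ≤ ε₂ := by
    have := (div_le_one hφ).mpr hle2
    nlinarith
  have hε₁0 : 0 ≤ ε₁ := by
    have := (div_le_one hφ).mpr hle1
    nlinarith
  -- key: p(φ⊓ψ) + p(φ⊓η) ≤ p(φ⊓ψ⊓η) + p φ
  have h3 := hadd (φ ⊓ ψ) (φ ⊓ η)
  have e3 : (φ ⊓ ψ) ⊓ (φ ⊓ η) = (φ ⊓ ψ) ⊓ η := by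
    rw [inf_assoc, inf_left_comm ψ φ η, ← inf_assoc φ φ, inf_idem, ← inf_assoc]
  have e4 : (φ ⊓ ψ) ⊔ (φ ⊓ η) ≤ φ := sup_le inf_le_left inf_le_left
  have hsup : p ((φ ⊓ ψ) ⊔ (φ ⊓ η)) ≤ p φ := mono _ _ e4
  rw [e3] at h3
  have hkey : p (φ ⊓ ψ) + p (φ ⊓ η) - p φ ≤ p ((φ ⊓ ψ) ⊓ η) := by linarith
  -- convert the division hypotheses
  have hb : (1 - ε₁) * p φ ≤ p (φ ⊓ ψ) := by
    nlinarith [(le_div_iff₀ hφ).mp h1]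
  have hc : (1 - ε₂) * p φ ≤ p (φ ⊓ η) := by
    nlinarith [(le_div_iff₀ hφ).mp h2]
  have main : p ((φ ⊓ ψ) ⊓ η) / p (φ ⊓ ψ) ≥ (1 - ε₁ - ε₂) / (1 - ε₁) := by
    rw [ge_iff_le, div_le_div_iff₀ h1ε hφψ]
    nlinarith [hnonneg ((φ ⊓ ψ) ⊓ η)]
  refine ⟨?_, main⟩
  have : 1 - (ε₁ + ε₂) / (1 - ε₁) ≤ (1 - ε₁ - ε₂) / (1 - ε₁) := by
    rw [le_div_iff₀ h1ε, sub_mul, one_mul, div_mul_cancel₀ _ (ne_of_gt h1ε)]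
    linarith
  linarith
end

section
/- Let W be a set, M a Boolean subalgebra of P(W), and f : M × M → M satisfy β1–β4. Then for all A, B ∈ M: A ∩ f(B, A) = A ∩ B. -/
theorem inf_le_of_inf_compl_le_compl {α : Type*} [BooleanAlgebra α] {a b c : α}
    (h : a ⊓ cᶜ ≤ bᶜ) : a ⊓ b ≤ c := by
  rw [← sdiff_eq_bot_iff, sdiff_eq, inf_right_comm]
  exact le_bot_iff.mp ((inf_le_inf_right b h).trans_eq (compl_inf_self b))

theorem inf_eq_inf_of_inf_le_of_inf_compl_le_compl {α : Type*} [BooleanAlgebra α] {a b c : α}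
    (h : a ⊓ c ≤ b) (hc : a ⊓ cᶜ ≤ bᶜ) : a ⊓ c = a ⊓ b :=
  le_antisymm (le_inf inf_le_left h) (le_inf inf_le_left (inf_le_of_inf_compl_le_compl hc))

theorem cond_model_inference_general {W : Type*} (M : Set (Set W))
    (hM_compl : ∀ A ∈ M, Aᶜ ∈ M)
    (f : Set W → Set W → Set W)
    (hβ3 : ∀ A ∈ M, ∀ B ∈ M, A ∩ f B A ⊆ B)
    (hβ4 : ∀ A ∈ M, ∀ B ∈ M, f Bᶜ A = (f B A)ᶜ) :
    ∀ A ∈ M, ∀ B ∈ M, A ∩ f B A = A ∩ B := by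
  intro A hA B hB
  have hβ3_compl : A ∩ (f B A)ᶜ ⊆ Bᶜ := hβ4 A hA B hB ▸ hβ3 A hA Bᶜ (hM_compl B hB)
  exact inf_eq_inf_of_inf_le_of_inf_compl_le_compl (hβ3 A hA B hB) hβ3_compl

/-- In a conditional model satisfying β1–β4, `A ∩ f(B,A) = A ∩ B`. -/
theorem cond_model_inference {W : Type*} (M : Set (Set W))
    (hM_univ : (Set.univ : Set W) ∈ M)
    (hM_inter : ∀ A ∈ M, ∀ B ∈ M, A ∩ B ∈ M)
    (hM_compl : ∀ A ∈ M, Aᶜ ∈ M)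
    (f : Set W → Set W → Set W)
    (hf : ∀ A ∈ M, ∀ B ∈ M, f B A ∈ M)
    (hβ1 : ∀ A ∈ M, ∀ B ∈ M, A ⊆ B → A ≠ ∅ → f B A = Set.univ)
    (hβ2 : ∀ A ∈ M, ∀ B ∈ M, ∀ C ∈ M, f (B ∪ C) A ⊆ f B A ∪ f C A)
    (hβ3 : ∀ A ∈ M, ∀ B ∈ M, A ∩ f B A ⊆ B)
    (hβ4 : ∀ A ∈ M, ∀ B ∈ M, f Bᶜ A = (f B A)ᶜ) :
    ∀ A ∈ M, ∀ B ∈ M, A ∩ f B A = A ∩ B :=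
  cond_model_inference_general M hM_compl f hβ3 hβ4
end

section
/- In the modal system T extended with axioms b3 ((ψ|φ) → (φ → ψ)) and b4 (¬(¬ψ|φ) ↔ (ψ|φ)), one can derive ⊢ φ → ((ψ|φ) ↔ ψ), and hence ⊢ □φ → □((ψ|φ) ↔ ψ); in the semantic formulation: in any conditional model (W,M,h,f) with β3 and β4, one has A ∩ f(B,A) = A ∩ B, and if A = W then f(B,A) = B. -/
theorem Set.inter_eq_inter_of_subset_of_compl_subset {α : Type*} {A B C : Set α}
    (hC : A ∩ C ⊆ B) (hCc : A ∩ Cᶜ ⊆ Bᶜ) : A ∩ C = A ∩ B :=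
  Set.Subset.antisymm (Set.subset_inter Set.inter_subset_left hC)
    fun _ ⟨hA, hB⟩ => ⟨hA, by_contra fun hx => hCc ⟨hA, hx⟩ hB⟩

theorem cond_model_full_universe_general {W : Type*} (M : Set (Set W))
    (hM_univ : (Set.univ : Set W) ∈ M)
    (hM_compl : ∀ A ∈ M, Aᶜ ∈ M)
    (f : Set W → Set W → Set W)
    (hβ3 : ∀ A ∈ M, ∀ B ∈ M, A ∩ f B A ⊆ B)
    (hβ4 : ∀ A ∈ M, ∀ B ∈ M, f Bᶜ A = (f B A)ᶜ) :
    (∀ A ∈ M, ∀ B ∈ M, A ∩ f B A = A ∩ B) ∧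
    (∀ B ∈ M, f B Set.univ = B) := by
  have inter_cond : ∀ A ∈ M, ∀ B ∈ M, A ∩ f B A = A ∩ B := fun A hA B hB =>
    Set.inter_eq_inter_of_subset_of_compl_subset (hβ3 A hA B hB)
      (hβ4 A hA B hB ▸ hβ3 A hA Bᶜ (hM_compl B hB))
  exact ⟨inter_cond, fun B hB => by simpa using inter_cond _ hM_univ B hB⟩

/-- Semantic 'full universe' theorem: in any conditional model with β3 and β4,
`A ∩ f(B,A) = A ∩ B`, and conditioning on the full universe is trivial:
`f(B, W) = B`. -/
theorem cond_model_full_universe {W : Type*} (M : Set (Set W))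
    (hM_univ : (Set.univ : Set W) ∈ M)
    (hM_inter : ∀ A ∈ M, ∀ B ∈ M, A ∩ B ∈ M)
    (hM_compl : ∀ A ∈ M, Aᶜ ∈ M)
    (f : Set W → Set W → Set W)
    (hf : ∀ A ∈ M, ∀ B ∈ M, f B A ∈ M)
    (hβ3 : ∀ A ∈ M, ∀ B ∈ M, A ∩ f B A ⊆ B)
    (hβ4 : ∀ A ∈ M, ∀ B ∈ M, f Bᶜ A = (f B A)ᶜ) :
    (∀ A ∈ M, ∀ B ∈ M, A ∩ f B A = A ∩ B) ∧
    (∀ B ∈ M, f B Set.univ = B) :=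
  cond_model_full_universe_general M hM_univ hM_compl f hβ3 hβ4
end

section
/- Let W, M, f be a conditional model satisfying β1–β4 and β5w. Suppose A, B ∈ M with f(B, A) = B (B independent of A) and A ∪ B = W. Then A = W or B = W. -/
theorem cond_model_indep_proof_general {W : Type*} (M : Set (Set W))
    (hM_compl : ∀ A ∈ M, Aᶜ ∈ M)
    (f : Set W → Set W → Set W)
    (hβ1 : ∀ A ∈ M, ∀ B ∈ M, A ⊆ B → A ≠ ∅ → f B A = Set.univ)
    (hβ5w : ∀ A ∈ M, ∀ B ∈ M, f B A = B → f B Aᶜ = B) :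
    ∀ A ∈ M, ∀ B ∈ M, f B A = B → A ∪ B = Set.univ →
      A = Set.univ ∨ B = Set.univ := by
  intro A hA B hB hBA hAB
  rcases Aᶜ.eq_empty_or_nonempty with hAc | hAc
  · exact Or.inl (Set.compl_empty_iff.mp hAc)
  · right
    calc B = f B Aᶜ := (hβ5w A hA B hB hBA).symm
      _ = Set.univ :=
        hβ1 Aᶜ (hM_compl A hA) B hB (Set.compl_subset_iff_union.mpr hAB) hAc.ne_empty

/-- Semantic 'independence and proof': in a conditional model with β1–β4 and β5w,
if `f(B,A) = B` and `A ∪ B = W`, then `A = W` or `B = W`. -/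
theorem cond_model_indep_proof {W : Type*} (M : Set (Set W))
    (hM_univ : (Set.univ : Set W) ∈ M)
    (hM_inter : ∀ A ∈ M, ∀ B ∈ M, A ∩ B ∈ M)
    (hM_compl : ∀ A ∈ M, Aᶜ ∈ M)
    (f : Set W → Set W → Set W)
    (hf : ∀ A ∈ M, ∀ B ∈ M, f B A ∈ M)
    (hβ1 : ∀ A ∈ M, ∀ B ∈ M, A ⊆ B → A ≠ ∅ → f B A = Set.univ)
    (hβ2 : ∀ A ∈ M, ∀ B ∈ M, ∀ C ∈ M, f (B ∪ C) A ⊆ f B A ∪ f C A)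
    (hβ3 : ∀ A ∈ M, ∀ B ∈ M, A ∩ f B A ⊆ B)
    (hβ4 : ∀ A ∈ M, ∀ B ∈ M, f Bᶜ A = (f B A)ᶜ)
    (hβ5w : ∀ A ∈ M, ∀ B ∈ M, f B A = B → f B Aᶜ = B) :
    ∀ A ∈ M, ∀ B ∈ M, f B A = B → A ∪ B = Set.univ →
      A = Set.univ ∨ B = Set.univ :=
  cond_model_indep_proof_general M hM_compl f hβ1 hβ5w
end

section
/- Let W, M, f be a conditional model satisfying β1–β4 and β5w. Let A, B, E ∈ M with f(A,E) = A, f(B,E) = B (both independent of E), and A ∩ E ⊆ B ∩ E. Then E = ∅ or A ⊆ B. -/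
/-! Since `A ∩ E ⊆ B`, the event `E` lies inside `Aᶜ ∪ B`, so by (β1) the conditional `f (Aᶜ ∪ B) E`
is everything once `E ≠ ∅`. Splitting it with (β2) and using independence, `f Aᶜ E = Aᶜ` (by (β4))
and `f B E = B`, gives `Aᶜ ∪ B = univ`, that is `A ⊆ B`. -/

open Set

section

variable {W : Type*}

theorem compl_union_mem_of_closed {M : Set (Set W)}
    (hM_inter : ∀ A ∈ M, ∀ B ∈ M, A ∩ B ∈ M) (hM_compl : ∀ A ∈ M, Aᶜ ∈ M)
    {A B : Set W} (hA : A ∈ M) (hB : B ∈ M) : Aᶜ ∪ B ∈ M := by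
  simpa only [compl_inter, compl_compl] using hM_compl _ (hM_inter A hA Bᶜ (hM_compl B hB))

theorem subset_compl_union_of_inter_subset {A B E : Set W} (h : A ∩ E ⊆ B ∩ E) :
    E ⊆ Aᶜ ∪ B := fun x hx =>
  (em (x ∈ A)).elim (fun hxA => Or.inr (h ⟨hxA, hx⟩).1) Or.inl

theorem cond_union_eq_univ_of_subset_union {M : Set (Set W)} {f : Set W → Set W → Set W}
    (hβ1 : ∀ A ∈ M, ∀ B ∈ M, A ⊆ B → A ≠ ∅ → f B A = Set.univ)
    (hβ2 : ∀ A ∈ M, ∀ B ∈ M, ∀ C ∈ M, f (B ∪ C) A ⊆ f B A ∪ f C A)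
    {B C E : Set W} (hB : B ∈ M) (hC : C ∈ M) (hE : E ∈ M) (hBC : B ∪ C ∈ M)
    (hsub : E ⊆ B ∪ C) (hne : E ≠ ∅) : f B E ∪ f C E = univ :=
  univ_subset_iff.mp (hβ1 E hE _ hBC hsub hne ▸ hβ2 E hE B hB C hC)

theorem cond_compl_of_cond_eq {M : Set (Set W)} {f : Set W → Set W → Set W}
    (hβ4 : ∀ A ∈ M, ∀ B ∈ M, f Bᶜ A = (f B A)ᶜ)
    {A E : Set W} (hA : A ∈ M) (hE : E ∈ M) (hAE : f A E = A) : f Aᶜ E = Aᶜ := by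
  rw [hβ4 E hE A hA, hAE]

end

theorem cond_model_regularity_general {W : Type*} (M : Set (Set W))
    (hM_inter : ∀ A ∈ M, ∀ B ∈ M, A ∩ B ∈ M)
    (hM_compl : ∀ A ∈ M, Aᶜ ∈ M)
    (f : Set W → Set W → Set W)
    (hβ1 : ∀ A ∈ M, ∀ B ∈ M, A ⊆ B → A ≠ ∅ → f B A = Set.univ)
    (hβ2 : ∀ A ∈ M, ∀ B ∈ M, ∀ C ∈ M, f (B ∪ C) A ⊆ f B A ∪ f C A)
    (hβ4 : ∀ A ∈ M, ∀ B ∈ M, f Bᶜ A = (f B A)ᶜ) :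
    ∀ A ∈ M, ∀ B ∈ M, ∀ E ∈ M, f A E = A → f B E = B →
      A ∩ E ⊆ B ∩ E → E = ∅ ∨ A ⊆ B := by
  intro A hA B hB E hE hAE hBE hsub
  refine or_iff_not_imp_left.mpr fun hne => ?_
  have hcover : f Aᶜ E ∪ f B E = univ :=
    cond_union_eq_univ_of_subset_union hβ1 hβ2 (hM_compl A hA) hB hE
      (compl_union_mem_of_closed hM_inter hM_compl hA hB)
      (subset_compl_union_of_inter_subset hsub) hne
  rw [cond_compl_of_cond_eq hβ4 hA hE hAE, hBE, ← compl_subset_iff_union, compl_compl] at hcover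
  exact hcover

/-- Semantic 'independence and regularity': in a conditional model with β1–β4 and β5w,
if `A` and `B` are independent of `E` and `A ∩ E ⊆ B ∩ E`, then `E = ∅` or `A ⊆ B`. -/
theorem cond_model_regularity {W : Type*} (M : Set (Set W))
    (hM_univ : (Set.univ : Set W) ∈ M)
    (hM_inter : ∀ A ∈ M, ∀ B ∈ M, A ∩ B ∈ M)
    (hM_compl : ∀ A ∈ M, Aᶜ ∈ M)
    (f : Set W → Set W → Set W)
    (hf : ∀ A ∈ M, ∀ B ∈ M, f B A ∈ M)
    (hβ1 : ∀ A ∈ M, ∀ B ∈ M, A ⊆ B → A ≠ ∅ → f B A = Set.univ)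
    (hβ2 : ∀ A ∈ M, ∀ B ∈ M, ∀ C ∈ M, f (B ∪ C) A ⊆ f B A ∪ f C A)
    (hβ3 : ∀ A ∈ M, ∀ B ∈ M, A ∩ f B A ⊆ B)
    (hβ4 : ∀ A ∈ M, ∀ B ∈ M, f Bᶜ A = (f B A)ᶜ)
    (hβ5w : ∀ A ∈ M, ∀ B ∈ M, f B A = B → f B Aᶜ = B) :
    ∀ A ∈ M, ∀ B ∈ M, ∀ E ∈ M, f A E = A → f B E = B →
      A ∩ E ⊆ B ∩ E → E = ∅ ∨ A ⊆ B :=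
  cond_model_regularity_general M hM_inter hM_compl f hβ1 hβ2 hβ4
end

section
/- Let Ω₀ be a finite set, P₀ a probability on P(Ω₀) with P₀({ω}) > 0 for all ω, and let b ⊆ Ω₀ with ∅ ≠ b ≠ Ω₀. Define Ω₁ = (b × (Ω₀∖b)) ∪ ((Ω₀∖b) × b), and define μ : P(Ω₀) → P(Ω₁) by μ(A) = ((A∩b) × (Ω₀∖b)) ∪ ((A∩(Ω₀∖b)) × b), and P₁ on Ω₁ by P₁((ω,ω')) = P₀(ω)P₀(ω')/P₀(Ω₀∖b) if (ω,ω') ∈ b × (Ω₀∖b), and P₁((ω',ω)) = P₀(ω)P₀(ω')/P₀(b) if (ω',ω) ∈ (Ω₀∖b) × b. Then (i) μ is an injective Boolean morphism (μ(A∩B)=μ(A)∩μ(B), μ(Ω₀∖A)=Ω₁∖μ(A)), and (ii) P₁(μ(A)) = P₀(A) for all A ⊆ Ω₀. -/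
open scoped BigOperators

/-- Probability of a subset of a finite type, from atom probabilities `p`. -/
noncomputable def P0 {Ω : Type*} [Fintype Ω] (p : Ω → ℝ) (A : Set Ω) : ℝ :=
  ∑ ω, A.indicator p ω

/-- The embedding `μ(A) = ((A∩b) × (Ω∖b)) ∪ ((A∩(Ω∖b)) × b)`. -/
def mu {Ω : Type*} (b : Set Ω) (A : Set Ω) : Set (Ω × Ω) :=
  ((A ∩ b) ×ˢ bᶜ) ∪ ((A ∩ bᶜ) ×ˢ b)

/-- Atom weights on `Ω × Ω`: `p ω · p ω' / P₀(Ω∖b)` on `b × (Ω∖b)` and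
`p ω' · p ω / P₀(b)` on `(Ω∖b) × b`, `0` elsewhere. -/
noncomputable def q1 {Ω : Type*} [Fintype Ω] (p : Ω → ℝ) (b : Set Ω)
    (x : Ω × Ω) : ℝ :=
  (b ×ˢ bᶜ).indicator (fun y => p y.1 * p y.2 / P0 p bᶜ) x +
    (bᶜ ×ˢ b).indicator (fun y => p y.1 * p y.2 / P0 p b) x

/-- The extended probability on subsets of `Ω × Ω`. -/
noncomputable def P1 {Ω : Type*} [Fintype Ω] (p : Ω → ℝ) (b : Set Ω)
    (S : Set (Ω × Ω)) : ℝ :=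
  ∑ x, S.indicator (q1 p b) x

section Embedding

variable {Ω : Type*} (b : Set Ω)

lemma mem_mu {A : Set Ω} {x : Ω × Ω} : x ∈ mu b A ↔ x.1 ∈ A ∧ (x.1 ∈ b ↔ x.2 ∉ b) := by
  rcases x with ⟨x, y⟩
  by_cases hx : x ∈ b <;> simp [mu, hx]

lemma mu_inter (A B : Set Ω) : mu b (A ∩ B) = mu b A ∩ mu b B := by
  ext x
  simp only [mem_mu, Set.mem_inter_iff]
  tauto

lemma mu_compl (A : Set Ω) : mu b Aᶜ = mu b Set.univ \ mu b A := by
  ext x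
  simp only [mem_mu, Set.mem_sdiff, Set.mem_compl_iff, Set.mem_univ, true_and]
  tauto

lemma image_fst_mu (hb : b.Nonempty) (hb' : bᶜ.Nonempty) (A : Set Ω) :
    Prod.fst '' mu b A = A := by
  obtain ⟨ω₀, hω₀⟩ := hb
  obtain ⟨ω₁, hω₁⟩ := hb'
  ext ω
  constructor
  · rintro ⟨x, hx, rfl⟩
    exact ((mem_mu b).1 hx).1
  · intro hω
    by_cases hωb : ω ∈ b
    · exact ⟨(ω, ω₁), (mem_mu b).2 ⟨hω, by simpa [hωb] using hω₁⟩, rfl⟩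
    · exact ⟨(ω, ω₀), (mem_mu b).2 ⟨hω, by simpa [hωb] using hω₀⟩, rfl⟩

lemma mu_injective (hb : b.Nonempty) (hb' : bᶜ.Nonempty) : Function.Injective (mu b) :=
  Function.LeftInverse.injective (g := (Prod.fst '' ·)) (image_fst_mu b hb hb')

end Embedding

section Probability

variable {Ω : Type*} [Fintype Ω] (p : Ω → ℝ)

lemma P0_pos (hpos : ∀ ω, 0 < p ω) {s : Set Ω} (hs : s.Nonempty) : 0 < P0 p s := by
  obtain ⟨ω, hω⟩ := hs
  refine Finset.sum_pos' (fun ω _ => Set.indicator_nonneg (fun ω _ => (hpos ω).le) ω)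
    ⟨ω, Finset.mem_univ _, ?_⟩
  simpa [Set.indicator_of_mem hω] using hpos ω

lemma P0_inter_add_inter_compl (A b : Set Ω) : P0 p (A ∩ b) + P0 p (A ∩ bᶜ) = P0 p A := by
  have hdisj : Disjoint (A ∩ b) (A ∩ bᶜ) :=
    disjoint_compl_right.mono Set.inter_subset_right Set.inter_subset_right
  simp only [P0, ← Finset.sum_add_distrib, ← Set.indicator_union_of_disjoint hdisj,
    Set.inter_union_compl]

lemma indicator_mu_q1 (b A : Set Ω) (x y : Ω) :
    (mu b A).indicator (q1 p b) (x, y) =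
      (A ∩ b).indicator p x * bᶜ.indicator p y / P0 p bᶜ +
        (A ∩ bᶜ).indicator p x * b.indicator p y / P0 p b := by
  by_cases hxA : x ∈ A <;> by_cases hxb : x ∈ b <;> by_cases hyb : y ∈ b <;>
    simp [q1, mu, hxA, hxb, hyb]

/-- On each half of `μ(A)` the weight is a product, so summing out the second coordinate
contributes exactly the normalising factor. -/
lemma P1_mu {b : Set Ω} (hb : P0 p b ≠ 0) (hb' : P0 p bᶜ ≠ 0) (A : Set Ω) :
    P1 p b (mu b A) = P0 p A := by
  calc P1 p b (mu b A)
      = P0 p (A ∩ b) * P0 p bᶜ / P0 p bᶜ + P0 p (A ∩ bᶜ) * P0 p b / P0 p b := by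
        simp only [P1, Fintype.sum_prod_type, indicator_mu_q1, Finset.sum_add_distrib,
          ← Finset.sum_div, P0, Fintype.sum_mul_sum]
    _ = P0 p A := by
        rw [mul_div_cancel_right₀ _ hb', mul_div_cancel_right₀ _ hb,
          P0_inter_add_inter_compl]

end Probability

theorem mu_injective_morphism_and_prob_ext_general {Ω : Type*} [Fintype Ω]
    (p : Ω → ℝ) (hpos : ∀ ω, 0 < p ω)
    (b : Set Ω) (hb : b ≠ ∅) (hb' : b ≠ Set.univ) :
    Function.Injective (mu b) ∧
    (∀ A B : Set Ω, mu b (A ∩ B) = mu b A ∩ mu b B) ∧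
    (∀ A : Set Ω, mu b Aᶜ = mu b Set.univ \ mu b A) ∧
    (∀ A : Set Ω, P1 p b (mu b A) = P0 p A) := by
  have hne : b.Nonempty := Set.nonempty_iff_ne_empty.2 hb
  have hne' : bᶜ.Nonempty := Set.nonempty_compl.2 hb'
  exact ⟨mu_injective b hne hne', mu_inter b, mu_compl b,
    P1_mu p (P0_pos p hpos hne).ne' (P0_pos p hpos hne').ne'⟩

/-- One step of the free conditional model construction: `μ` is an injective
Boolean morphism and the extended probability `P₁` satisfies `P₁(μ(A)) = P₀(A)`. -/
theorem mu_injective_morphism_and_prob_ext {Ω : Type*} [Fintype Ω]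
    (p : Ω → ℝ) (hpos : ∀ ω, 0 < p ω) (hsum : ∑ ω, p ω = 1)
    (b : Set Ω) (hb : b ≠ ∅) (hb' : b ≠ Set.univ) :
    Function.Injective (mu b) ∧
    (∀ A B : Set Ω, mu b (A ∩ B) = mu b A ∩ mu b B) ∧
    (∀ A : Set Ω, mu b Aᶜ = mu b Set.univ \ mu b A) ∧
    (∀ A : Set Ω, P1 p b (mu b A) = P0 p A) :=
  mu_injective_morphism_and_prob_ext_general p hpos b hb hb'
end

section
/- With the notation of the one-step construction (Ω₁ = (b × c) ∪ (c × b) where c = Ω₀∖b, μ, P₁ as above), define f₁(A, μ(b)) = (id ∪ T)(A ∩ (b × c)) for A ⊆ Ω₁, where T(x,y) = (y,x) and (id ∪ T)(C) = C ∪ T(C). Then for every A ⊆ Ω₁: P₁(μ(b) ∩ A) = P₁(μ(b)) · P₁(f₁(A, μ(b))). -/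
open scoped BigOperators

/-- The conditioning `f₁(A, μ(b)) = (id ∪ T)(A ∩ (b × c))`, where `T` is the swap. -/
def f1 {Ω : Type*} (b : Set Ω) (A : Set (Ω × Ω)) : Set (Ω × Ω) :=
  (A ∩ (b ×ˢ bᶜ)) ∪ (Prod.swap '' (A ∩ (b ×ˢ bᶜ)))

/-- Bayes multiplicativity of the one-step construction:
`P₁(μ(b) ∩ A) = P₁(μ(b)) · P₁(f₁(A, μ(b)))`. -/
theorem bayes_multiplicativity_step {Ω : Type*} [Fintype Ω]
    (p : Ω → ℝ) (hpos : ∀ ω, 0 < p ω) (hsum : ∑ ω, p ω = 1)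
    (b : Set Ω) (hb : b ≠ ∅) (hb' : b ≠ Set.univ) :
    ∀ A : Set (Ω × Ω),
      P1 p b (mu b b ∩ A) = P1 p b (mu b b) * P1 p b (f1 b A) := by
  classical
  intro A
  have hbne : b.Nonempty := Set.nonempty_iff_ne_empty.mpr hb
  have hcne : bᶜ.Nonempty := by rw [Set.nonempty_compl]; exact hb'
  have hP0pos : ∀ S : Set Ω, S.Nonempty → 0 < P0 p S := by
    rintro S ⟨ω, hω⟩
    apply Finset.sum_pos'
    · intro i _
      by_cases h : i ∈ S <;> simp [Set.indicator, h, (hpos i).le]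
    · exact ⟨ω, Finset.mem_univ ω, by simp [Set.indicator, hω, hpos ω]⟩
  have hPb := hP0pos b hbne
  have hPc := hP0pos bᶜ hcne
  have hsum1 : P0 p b + P0 p bᶜ = 1 := by
    rw [← hsum, P0, P0, ← Finset.sum_add_distrib]
    refine Finset.sum_congr rfl fun ω _ => ?_
    by_cases h : ω ∈ b <;> simp [Set.indicator, h]
  have hmu : mu b b = b ×ˢ bᶜ := by
    simp [mu, Set.inter_self]
  set S := A ∩ b ×ˢ bᶜ with hSdef
  set L := ∑ x : Ω × Ω, S.indicator (fun y => p y.1 * p y.2) x with hL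
  have keyfwd : ∀ T : Set (Ω × Ω), T ⊆ b ×ˢ bᶜ →
      P1 p b T = (∑ x : Ω × Ω, T.indicator (fun y => p y.1 * p y.2) x) / P0 p bᶜ := by
    intro T hT
    rw [P1, Finset.sum_div]
    refine Finset.sum_congr rfl fun x _ => ?_
    by_cases hx : x ∈ T
    · have h1 : x ∈ b ×ˢ bᶜ := hT hx
      have h2 : x ∉ bᶜ ×ˢ b := fun h => h.1 h1.1
      rw [Set.indicator_of_mem hx, Set.indicator_of_mem hx, q1,
        Set.indicator_of_mem h1, Set.indicator_of_notMem h2, add_zero]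
    · rw [Set.indicator_of_notMem hx, Set.indicator_of_notMem hx, zero_div]
  have keyswap : P1 p b (Prod.swap '' S) = L / P0 p b := by
    rw [P1]
    rw [← Equiv.sum_comp (Equiv.prodComm Ω Ω) fun x => (Prod.swap '' S).indicator (q1 p b) x]
    rw [hL, Finset.sum_div]
    refine Finset.sum_congr rfl fun x _ => ?_
    by_cases hx : x ∈ S
    · have hmem : (Equiv.prodComm Ω Ω) x ∈ Prod.swap '' S := ⟨x, hx, rfl⟩
      have h1 : x ∈ b ×ˢ bᶜ := hx.2
      have hc1 : (x.2, x.1) ∈ bᶜ ×ˢ b := ⟨h1.2, h1.1⟩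
      have hc2 : (x.2, x.1) ∉ b ×ˢ bᶜ := fun h => h1.2 h.1
      rw [Set.indicator_of_mem hmem, Set.indicator_of_mem hx]
      show q1 p b (x.2, x.1) = p x.1 * p x.2 / P0 p b
      rw [q1, Set.indicator_of_notMem hc2, Set.indicator_of_mem hc1, zero_add]
      simp [mul_comm]
    · have hmem : (Equiv.prodComm Ω Ω) x ∉ Prod.swap '' S := by
        rintro ⟨y, hy, hyx⟩
        have : y = x := by
          have := congrArg Prod.swap hyx
          simpa using this
        exact hx (this ▸ hy)
      rw [Set.indicator_of_notMem hmem, Set.indicator_of_notMem hx, zero_div]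
  have hdisj : Disjoint S (Prod.swap '' S) := by
    rw [Set.disjoint_left]
    rintro x hx ⟨y, hy, rfl⟩
    exact hy.2.2 hx.2.1
  have hsplit : P1 p b (f1 b A) = P1 p b S + P1 p b (Prod.swap '' S) := by
    rw [f1, P1, P1, P1, ← Finset.sum_add_distrib]
    refine Finset.sum_congr rfl fun x _ => ?_
    rw [← hSdef, Set.indicator_union_of_disjoint hdisj]
  have hPS : P1 p b S = L / P0 p bᶜ := keyfwd S Set.inter_subset_right
  have hmub : P1 p b (mu b b) = P0 p b := by
    rw [hmu, keyfwd _ le_rfl]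
    have : (∑ x : Ω × Ω, (b ×ˢ bᶜ).indicator (fun y => p y.1 * p y.2) x)
        = P0 p b * P0 p bᶜ := by
      rw [P0, P0, Finset.sum_mul_sum, Fintype.sum_prod_type]
      refine Finset.sum_congr rfl fun a _ => Finset.sum_congr rfl fun c _ => ?_
      by_cases ha : a ∈ b <;> by_cases hc : c ∈ bᶜ <;>
        simp [Set.indicator, ha, hc]
    rw [this, mul_div_assoc, div_self hPc.ne', mul_one]
  have hLHS : mu b b ∩ A = S := by rw [hmu, Set.inter_comm]
  rw [hLHS, hPS, hmub, hsplit, hPS, keyswap]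
  field_simp
  linear_combination (-L) * hsum1
end
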